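/- Let d ≥ 3 and m ≥ d−2 (m ∈ ℝ). Let φ : ℝ^d → ℂ be a compactly supported function that belongs to C_b^m(O,ℂ) for some open set O ⊆ ℝ^d containing the support of φ, with ⌊m⌋ ≥ d−2. Then the Fourier integral φ̂(a) = ∫_{ℝ^d} φ(t) e^{-i⟨t,a⟩} dt satisfies φ̂(a) = o(‖a‖^{-(d−2)}) as ‖a‖ → ∞. In particular, under the hypotheses of the renewal theorem (Hypothesis R(m) with m = max{d−2, 2+ε}), the quantities J(a) = ∫_{‖t‖≤α} χ(t) ĥ(t) (Σ_{n≥1} R_n(t)) e^{-i⟨t,a⟩} dt and K(a) = ∫_{r<‖t‖≤b} (1−χ(t)) ĥ(t) (Σ_{n≥1} E[f(X_n) e^{i⟨t,S_n⟩}]) e^{-i⟨t,a⟩} dt satisfy J(a) + K(a) = o(‖a‖^{-(d−2)}) as ‖a‖ → ∞. -/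

import Mathlib

open MeasureTheory Filter Metric
open scoped Topology ENNReal NNReal BigOperators

noncomputable section

abbrev Ed (d : ℕ) : Type := EuclideanSpace ℝ (Fin d)

/-- Membership in `C_b^m(O, ℂ)`. -/
def IsCbm {d : ℕ} (m : ℝ) (O : Set (Ed d)) (U : Ed d → ℂ) : Prop :=
  ContDiffOn ℝ (⌊m⌋₊ : ℕ) U O ∧
  (∀ j : ℕ, j ≤ ⌊m⌋₊ → ∃ C : ℝ, ∀ t ∈ O, ‖iteratedFDerivWithin ℝ j U O t‖ ≤ C) ∧
  ∃ C : ℝ, 0 ≤ C ∧ ∀ t ∈ O, ∀ t' ∈ O,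
    ‖iteratedFDerivWithin ℝ (⌊m⌋₊) U O t - iteratedFDerivWithin ℝ (⌊m⌋₊) U O t'‖
      ≤ C * ‖t - t'‖ ^ (m - (⌊m⌋₊ : ℝ))

/-- Fourier transform with the convention `ĝ(t) = ∫ g(x) e^{-i⟨t,x⟩} dx`. -/
def ftransform {d : ℕ} (g : Ed d → ℂ) (t : Ed d) : ℂ :=
  ∫ x : Ed d, g x * Complex.exp (-Complex.I * ((inner ℝ t x : ℝ) : ℂ))

/-- The space `H_k`. -/
def MemHk {d : ℕ} (k : ℕ) (g : Ed d → ℂ) : Prop :=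
  Continuous g ∧ Integrable g ∧ HasCompactSupport (ftransform g) ∧
    ContDiff ℝ (k : ℕ∞) (ftransform g)

/-- The constant `C_d`. -/
def Cd (d : ℕ) (Sig : Matrix (Fin d) (Fin d) ℝ) : ℝ :=
  2⁻¹ * Real.pi ^ (-(d : ℝ) / 2) * Sig.det ^ (-(1 : ℝ) / 2) * Real.Gamma (((d : ℝ) - 2) / 2)

/-- `⟨Σ⁻¹ a, a⟩`. -/
def qInv {d : ℕ} (Sig : Matrix (Fin d) (Fin d) ℝ) (a : Ed d) : ℝ :=
  ∑ i, ∑ j, Sig⁻¹ i j * a j * a i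

/-- `⟨Σ t, t⟩`. -/
def qMat {d : ℕ} (Sig : Matrix (Fin d) (Fin d) ℝ) (t : Ed d) : ℝ :=
  ∑ i, ∑ j, Sig i j * t j * t i

/-- characteristic-type function `t ↦ E[f(X_n) e^{i⟨t,S_n⟩}]`. -/
def charFn {E Ω : Type*} [MeasurableSpace Ω] {d : ℕ} (ℙ : Measure Ω) (f : E → ℝ)
    (X : ℕ → Ω → E) (S : ℕ → Ω → Ed d) (n : ℕ) (t : Ed d) : ℂ :=
  ∫ ω, (f (X n ω) : ℂ) * Complex.exp (Complex.I * ((inner ℝ t (S n ω) : ℝ) : ℂ)) ∂ℙ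

/-- Hypothesis `R(m)`-(i) for the family of characteristic-type functions `φ`. -/
def HypROne {d : ℕ} (φ : ℕ → Ed d → ℂ) (m R : ℝ) (lam L : Ed d → ℂ)
    (Rn : ℕ → Ed d → ℂ) : Prop :=
  0 < R ∧ lam 0 = 1 ∧ IsCbm m (ball 0 R) lam ∧ IsCbm m (ball 0 R) L ∧
  (∀ n : ℕ, 1 ≤ n → ∀ t ∈ ball (0 : Ed d) R, φ n t = lam t ^ n * L t + Rn n t) ∧
  TendstoUniformlyOn (fun N t => ∑ n ∈ Finset.range N, Rn (n + 1) t)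
    (fun t => ∑' n : ℕ, Rn (n + 1) t) atTop (ball (0 : Ed d) R) ∧
  IsCbm m (ball 0 R) (fun t => ∑' n : ℕ, Rn (n + 1) t)

/-- Hypothesis `R(m)`-(ii) for the family of characteristic-type functions `φ`. -/
def HypRTwo {d : ℕ} (φ : ℕ → Ed d → ℂ) (m : ℝ) : Prop :=
  ∀ r r' : ℝ, 0 < r → r < r' →
    TendstoUniformlyOn (fun N t => ∑ n ∈ Finset.range N, φ (n + 1) t)
      (fun t => ∑' n : ℕ, φ (n + 1) t) atTop {t : Ed d | r < ‖t‖ ∧ ‖t‖ < r'} ∧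
    IsCbm m {t : Ed d | r < ‖t‖ ∧ ‖t‖ < r'} (fun t => ∑' n : ℕ, φ (n + 1) t)

/-- `e^{-i⟨t,a⟩}`. -/
def eMinus {d : ℕ} (t a : Ed d) : ℂ :=
  Complex.exp (-Complex.I * ((inner ℝ t a : ℝ) : ℂ))
/-!
Integrating by parts `k` times, the Fourier transform of a compactly supported `C^k` function
`φ` at `w` is, up to the factor `(2π‖w‖)^{-k}`, the Fourier transform of `D^k φ` evaluated in
the direction `w / ‖w‖`, and the latter tends to `0` by the Riemann–Lebesgue lemma.
The integrands of `J` and `K` are of this kind with `k = d - 2`: `χ ĥ Σ Rₙ` is `C^{d-2}` on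
`B(0, R)` and vanishes off `closedBall 0 α`, while `(1 - χ) ĥ Σ E[f(Xₙ) e^{i⟨t,Sₙ⟩}]` is
`C^{d-2}` on an open annulus and vanishes off the compact annulus `r ≤ ‖t‖ ≤ b`.
-/

open Asymptotics Real
open scoped FourierTransform RealInnerProductSpace

section FourierDecay

variable {V E : Type*} [NormedAddCommGroup V] [InnerProductSpace ℝ V] [FiniteDimensional ℝ V]
  [MeasurableSpace V] [BorelSpace V] [NormedAddCommGroup E] [NormedSpace ℂ E]

theorem Real.pow_mul_norm_fourier_le_norm_fourier_iteratedFDeriv {k : ℕ} {f : V → E}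
    (hf : ContDiff ℝ k f) (hint : ∀ n ≤ k, Integrable (iteratedFDeriv ℝ n f)) (w : V) :
    (2 * π) ^ k * ‖w‖ ^ k * ‖𝓕 f w‖ ≤ ‖𝓕 (iteratedFDeriv ℝ k f) w‖ := by
  set u : V := ‖w‖⁻¹ • w
  have hu : ‖u‖ ≤ 1 := by
    rw [norm_smul, norm_inv, norm_norm]
    exact inv_mul_le_one
  have hwu : (-innerSL ℝ) w u = -‖w‖ := by
    rw [neg_apply, neg_apply, innerSL_apply_apply, real_inner_smul_right,
      real_inner_self_eq_norm_sq]
    rcases eq_or_ne ‖w‖ 0 with h | h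
    · simp [h]
    · field_simp
  have hint' : ∀ n : ℕ, (n : ℕ∞) ≤ k → Integrable (iteratedFDeriv ℝ n f) :=
    fun n hn => hint n (by exact_mod_cast hn)
  calc (2 * π) ^ k * ‖w‖ ^ k * ‖𝓕 f w‖ = ‖𝓕 (iteratedFDeriv ℝ k f) w (fun _ => u)‖ := by
        rw [Real.fourier_iteratedFDeriv (N := k) hf hint' le_rfl,
          VectorFourier.fourierPowSMulRight_apply, Finset.prod_const, hwu]
        simp [norm_smul, abs_of_nonneg pi_nonneg, mul_assoc]
    _ ≤ ‖𝓕 (iteratedFDeriv ℝ k f) w‖ * ∏ _ : Fin k, ‖u‖ := ContinuousMultilinearMap.le_opNorm _ _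
    _ ≤ ‖𝓕 (iteratedFDeriv ℝ k f) w‖ :=
        mul_le_of_le_one_right (norm_nonneg _)
          (Finset.prod_le_one (fun _ _ => norm_nonneg _) fun _ _ => hu)

theorem Real.fourier_isLittleO_rpow_neg_of_contDiff {k : ℕ} {f : V → E}
    (hf : ContDiff ℝ k f) (hint : ∀ n ≤ k, Integrable (iteratedFDeriv ℝ n f)) :
    𝓕 f =o[cocompact V] fun w => ‖w‖ ^ (-(k : ℝ)) := by
  have hRL : Tendsto (𝓕 (iteratedFDeriv ℝ k f)) (cocompact V) (𝓝 0) := by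
    simpa only [← Real.fourier_eq] using
      tendsto_integral_exp_inner_smul_cocompact (iteratedFDeriv ℝ k f)
  have hbound :
      𝓕 f =O[cocompact V] fun w => ‖w‖ ^ (-(k : ℝ)) * ‖𝓕 (iteratedFDeriv ℝ k f) w‖ := by
    refine IsBigO.of_bound ((2 * π) ^ k)⁻¹ ?_
    filter_upwards [(isCompact_singleton (x := (0 : V))).compl_mem_cocompact] with w hw
    have hw : 0 < ‖w‖ := norm_pos_iff.2 hw
    rw [norm_mul, norm_norm, Real.norm_of_nonneg (by positivity), Real.rpow_neg hw.le,
      Real.rpow_natCast, ← mul_assoc, ← mul_inv, ← div_eq_inv_mul, le_div_iff₀ (by positivity),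
      mul_comm]
    exact pow_mul_norm_fourier_le_norm_fourier_iteratedFDeriv hf hint w
  simpa using hbound.trans_isLittleO
    ((isBigO_refl _ _).mul_isLittleO ((isLittleO_one_iff ℝ).2 hRL).norm_left)

end FourierDecay

theorem ContDiffOn.contDiff_of_tsupport_subset {𝕜 E F : Type*} [NontriviallyNormedField 𝕜]
    [NormedAddCommGroup E] [NormedSpace 𝕜 E] [NormedAddCommGroup F] [NormedSpace 𝕜 F]
    {n : WithTop ℕ∞} {f : E → F} {s : Set E} (hf : ContDiffOn 𝕜 n f s) (hs : IsOpen s)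
    (hsupp : tsupport f ⊆ s) : ContDiff 𝕜 n f :=
  contDiff_of_contDiffOn_union_of_isOpen hf
    (contDiffOn_const.congr fun _ hx => image_eq_zero_of_notMem_tsupport hx)
    (Set.eq_univ_of_forall fun x => (em (x ∈ tsupport f)).imp (fun hx => hsupp hx) id) hs
    (isClosed_tsupport f).isOpen_compl

section EuclideanFourier

variable {d : ℕ}

theorem ftransform_eq_fourier_smul (g : Ed d → ℂ) (a : Ed d) :
    ftransform g a = 𝓕 g ((2 * π)⁻¹ • a) := by
  rw [Real.fourier_eq, ftransform]
  congr 1 with x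
  rw [Circle.smul_def, Real.fourierChar_apply, smul_eq_mul, mul_comm, real_inner_smul_right,
    real_inner_comm]
  congr 2
  push_cast
  field_simp

theorem ftransform_isLittleO_of_contDiff {k : ℕ} {φ : Ed d → ℂ} (hφ : ContDiff ℝ k φ)
    (hs : HasCompactSupport φ) :
    ftransform φ =o[cocompact (Ed d)] fun a => ‖a‖ ^ (-(k : ℝ)) := by
  have hint : ∀ n ≤ k, Integrable (iteratedFDeriv ℝ n φ) := fun n hn =>
    (hφ.continuous_iteratedFDeriv (by exact_mod_cast hn)).integrable_of_hasCompactSupport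
      (hs.iteratedFDeriv n)
  have hscale : Tendsto (fun a : Ed d => (2 * π)⁻¹ • a) (cocompact _) (cocompact _) :=
    (Homeomorph.smulOfNeZero ((2 * π)⁻¹ : ℝ) (by positivity)).toCocompactMap.cocompact_tendsto'
  refine (((fourier_isLittleO_rpow_neg_of_contDiff hφ hint).comp_tendsto hscale).trans_isBigO
    ?_).congr_left fun a => (ftransform_eq_fourier_smul φ a).symm
  refine (isBigO_const_mul_self (((2 * π)⁻¹) ^ (-(k : ℝ))) _ _).congr_left fun a => ?_
  rw [Function.comp_apply, norm_smul, Real.norm_of_nonneg (by positivity),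
    Real.mul_rpow (by positivity) (norm_nonneg _)]

theorem setIntegral_mul_eMinus_eq_ftransform {φ : Ed d → ℂ} {s : Set (Ed d)}
    (hs : Function.support φ ⊆ s) (a : Ed d) :
    ∫ t in s, φ t * eMinus t a = ftransform φ a := by
  rw [setIntegral_eq_integral_of_forall_compl_eq_zero fun t ht => by
    rw [Function.notMem_support.1 fun h => ht (hs h), zero_mul]]
  simp only [ftransform, eMinus, real_inner_comm]

theorem setIntegral_mul_eMinus_isLittleO_of_contDiffOn {k : ℕ} {φ : Ed d → ℂ}
    {s K O : Set (Ed d)} (hK : IsCompact K) (hsK : s ⊆ K) (hKO : K ⊆ O) (hO : IsOpen O)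
    (hs : Function.support φ ⊆ s) (hφ : ContDiffOn ℝ k φ O) :
    (fun a => ∫ t in s, φ t * eMinus t a) =o[cocompact (Ed d)] fun a => ‖a‖ ^ (-(k : ℝ)) := by
  have hsupp : Function.support φ ⊆ K := hs.trans hsK
  have hφ' : ContDiff ℝ k φ :=
    hφ.contDiff_of_tsupport_subset hO ((closure_minimal hsupp hK.isClosed).trans hKO)
  exact (ftransform_isLittleO_of_contDiff hφ' (HasCompactSupport.of_support_subset_isCompact hK
    hsupp)).congr_left fun a => (setIntegral_mul_eMinus_eq_ftransform hs a).symm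

theorem setIntegral_closedBall_mul_eMinus_isLittleO {k : ℕ} {φ : Ed d → ℂ} {α R : ℝ}
    (hαR : α < R) (hs : Function.support φ ⊆ closedBall 0 α)
    (hφ : ContDiffOn ℝ k φ (ball 0 R)) :
    (fun a => ∫ t in closedBall 0 α, φ t * eMinus t a) =o[cocompact (Ed d)]
      fun a => ‖a‖ ^ (-(k : ℝ)) :=
  setIntegral_mul_eMinus_isLittleO_of_contDiffOn (isCompact_closedBall 0 α) subset_rfl
    (closedBall_subset_ball hαR) isOpen_ball hs hφ

theorem setIntegral_annulus_mul_eMinus_isLittleO {k : ℕ} {φ : Ed d → ℂ} {r b ρ ρ' : ℝ}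
    (hρ : ρ < r) (hρ' : b < ρ') (hs : Function.support φ ⊆ {t | r < ‖t‖ ∧ ‖t‖ ≤ b})
    (hφ : ContDiffOn ℝ k φ {t | ρ < ‖t‖ ∧ ‖t‖ < ρ'}) :
    (fun a => ∫ t in {t | r < ‖t‖ ∧ ‖t‖ ≤ b}, φ t * eMinus t a) =o[cocompact (Ed d)]
      fun a => ‖a‖ ^ (-(k : ℝ)) := by
  refine setIntegral_mul_eMinus_isLittleO_of_contDiffOn
    ((isCompact_closedBall 0 b).diff (isOpen_ball (x := 0) (ε := r))) ?_ ?_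
    ((isOpen_lt continuous_const continuous_norm).inter
      (isOpen_lt continuous_norm continuous_const)) hs hφ
  · rintro t ⟨htr, htb⟩
    exact ⟨mem_closedBall_zero_iff.2 htb, fun h => (mem_ball_zero_iff.1 h).not_gt htr⟩
  · rintro t ⟨htb, htr⟩
    rw [mem_closedBall_zero_iff] at htb
    rw [mem_ball_zero_iff, not_lt] at htr
    exact ⟨show ρ < ‖t‖ by linarith, show ‖t‖ < ρ' by linarith⟩

end EuclideanFourier

theorem fourier_decay_and_JK_estimate_general
    {E Ω : Type*} [MeasurableSpace Ω]
    {d : ℕ} (hd : 3 ≤ d)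
    (m : ℝ) (hm' : d - 2 ≤ ⌊m⌋₊)
    (ℙ : Measure Ω)
    (X : ℕ → Ω → E) (S : ℕ → Ω → Ed d)
    (f : E → ℝ)
    (ε : ℝ)
    (mren : ℝ) (hmren : mren = max ((d : ℝ) - 2) (2 + ε))
    (R : ℝ) (lam L : Ed d → ℂ) (Rn : ℕ → Ed d → ℂ)
    (h1 : HypROne (charFn ℙ f X S) mren R lam L Rn)
    (h2 : HypRTwo (charFn ℙ f X S) mren)
    (h : Ed d → ℂ) (hh : MemHk (d - 2) h)
    (b : ℝ) (hhb : ∀ t : Ed d, b < ‖t‖ → ftransform h t = 0)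
    (r α : ℝ) (hr : 0 < r) (hαR : α < R)
    (χ : Ed d → ℝ) (hχ : ContDiff ℝ (⊤ : ℕ∞) χ)
    (hχsupp : Function.support χ ⊆ closedBall (0 : Ed d) α)
    (hχone : ∀ t : Ed d, ‖t‖ ≤ r → χ t = 1) :
    (∀ (O : Set (Ed d)) (φ : Ed d → ℂ), IsOpen O → HasCompactSupport φ →
        tsupport φ ⊆ O → IsCbm m O φ →
        ftransform φ =o[cocompact (Ed d)] fun a : Ed d => ‖a‖ ^ (-((d : ℝ) - 2))) ∧
    ((fun a : Ed d =>
        (∫ t in closedBall (0 : Ed d) α,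
          ((χ t : ℝ) : ℂ) * ftransform h t * (∑' n : ℕ, Rn (n + 1) t) * eMinus t a) +
        ∫ t in {t : Ed d | r < ‖t‖ ∧ ‖t‖ ≤ b},
          (1 - ((χ t : ℝ) : ℂ)) * ftransform h t *
            (∑' n : ℕ, charFn ℙ f X S (n + 1) t) * eMinus t a)
      =o[cocompact (Ed d)] fun a : Ed d => ‖a‖ ^ (-((d : ℝ) - 2))) := by
  have hk : ((d - 2 : ℕ) : ℝ) = (d : ℝ) - 2 := by
    rw [Nat.cast_sub (by omega)]
    norm_num
  rw [← hk]
  have hkm : d - 2 ≤ ⌊mren⌋₊ := Nat.le_floor (by rw [hk, hmren]; exact le_max_left _ _)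
  have hχC : ContDiff ℝ (d - 2 : ℕ) fun t => ((χ t : ℝ) : ℂ) :=
    (Complex.ofRealCLM.contDiff.comp hχ).of_le (WithTop.coe_le_coe.2 le_top)
  have hĥ : ContDiff ℝ (d - 2 : ℕ) (ftransform h) := hh.2.2.2
  have hJ : Function.support (fun t => ((χ t : ℝ) : ℂ) * ftransform h t *
      ∑' n : ℕ, Rn (n + 1) t) ⊆ closedBall 0 α :=
    fun t ht => hχsupp fun hχt => ht (by simp [hχt])
  have hK : Function.support (fun t => (1 - ((χ t : ℝ) : ℂ)) * ftransform h t *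
      ∑' n : ℕ, charFn ℙ f X S (n + 1) t) ⊆ {t : Ed d | r < ‖t‖ ∧ ‖t‖ ≤ b} :=
    fun t ht => ⟨lt_of_not_ge fun htr => ht (by simp [hχone t htr]),
      le_of_not_gt fun htb => ht (by simp [hhb t htb])⟩
  have hF := h1.2.2.2.2.2.2.1.of_le (m := (d - 2 : ℕ)) (by exact_mod_cast hkm)
  have hG := (h2 (r / 2) (max r b + 1) (by positivity) (by linarith [le_max_left r b])).2.1.of_le
    (m := (d - 2 : ℕ)) (by exact_mod_cast hkm)
  refine ⟨fun O φ hO hs hsO hφ => ftransform_isLittleO_of_contDiff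
      ((hφ.1.of_le (by exact_mod_cast hm')).contDiff_of_tsupport_subset hO hsO) hs, .add ?_ ?_⟩
  · exact setIntegral_closedBall_mul_eMinus_isLittleO hαR hJ
      ((hχC.contDiffOn.mul hĥ.contDiffOn).mul hF)
  · exact setIntegral_annulus_mul_eMinus_isLittleO (half_lt_self hr)
      (by linarith [le_max_right r b]) hK
      (((contDiff_const.sub hχC).contDiffOn.mul hĥ.contDiffOn).mul hG)

/-- **Lemma (Fourier decay of `C_b^m` compactly supported functions, and
`J(a) + K(a) = o(‖a‖^{-(d-2)})`).** -/
theorem fourier_decay_and_JK_estimate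
    {E Ω : Type*} [MeasurableSpace E] [MeasurableSpace Ω]
    {d : ℕ} (hd : 3 ≤ d)
    (m : ℝ) (hm : (d : ℝ) - 2 ≤ m) (hm' : d - 2 ≤ ⌊m⌋₊)
    (ℙ : Measure Ω) [IsProbabilityMeasure ℙ]
    (X : ℕ → Ω → E) (S : ℕ → Ω → Ed d)
    (hX : ∀ n, Measurable (X n)) (hS : ∀ n, Measurable (S n))
    (f : E → ℝ) (hf_meas : Measurable f) (hf_nonneg : ∀ x, 0 ≤ f x)
    (hf_int : ∀ n : ℕ, 1 ≤ n → Integrable (fun ω => f (X n ω)) ℙ)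
    (ε : ℝ) (hε : 0 < ε)
    (mren : ℝ) (hmren : mren = max ((d : ℝ) - 2) (2 + ε))
    (R : ℝ) (lam L : Ed d → ℂ) (Rn : ℕ → Ed d → ℂ)
    (h1 : HypROne (charFn ℙ f X S) mren R lam L Rn)
    (h2 : HypRTwo (charFn ℙ f X S) mren)
    (h : Ed d → ℂ) (hh : MemHk (d - 2) h)
    (b : ℝ) (hb : 0 < b) (hhb : ∀ t : Ed d, b < ‖t‖ → ftransform h t = 0)
    (r α : ℝ) (hr : 0 < r) (hrα : r < α) (hαR : α < R)
    (χ : Ed d → ℝ) (hχ : ContDiff ℝ (⊤ : ℕ∞) χ) (hχc : HasCompactSupport χ)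
    (hχsupp : Function.support χ ⊆ closedBall (0 : Ed d) α)
    (hχone : ∀ t : Ed d, ‖t‖ ≤ r → χ t = 1) :
    (∀ (O : Set (Ed d)) (φ : Ed d → ℂ), IsOpen O → HasCompactSupport φ →
        tsupport φ ⊆ O → IsCbm m O φ →
        ftransform φ =o[cocompact (Ed d)] fun a : Ed d => ‖a‖ ^ (-((d : ℝ) - 2))) ∧
    ((fun a : Ed d =>
        (∫ t in closedBall (0 : Ed d) α,
          ((χ t : ℝ) : ℂ) * ftransform h t * (∑' n : ℕ, Rn (n + 1) t) * eMinus t a) +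
        ∫ t in {t : Ed d | r < ‖t‖ ∧ ‖t‖ ≤ b},
          (1 - ((χ t : ℝ) : ℂ)) * ftransform h t *
            (∑' n : ℕ, charFn ℙ f X S (n + 1) t) * eMinus t a)
      =o[cocompact (Ed d)] fun a : Ed d => ‖a‖ ^ (-((d : ℝ) - 2))) :=
  fourier_decay_and_JK_estimate_general hd m hm' ℙ X S f ε mren hmren R lam L Rn h1 h2 h hh b hhb r
    α hr hαR χ hχ hχsupp hχone
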